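/- The sums S_n = Σ_{k=1}^{n−1} (H_n − H_k)/(n − k) converge to π²/6 as n → ∞; that is, for every ε > 0 there exists n₀ such that |π²/6 − Σ_{k=1}^{n−1} (H_n − H_k)/(n − k)| ≤ ε for all n ≥ n₀. -/

import Mathlib

/-! Writing `S n` for the sum, the identity
`H (m+1) - H (k+1) = (H m - H k) - (m - k) / ((m+1)(k+1))` gives
`S (m+1) = S m + H m / m - H m / (m+1)`, hence the closed form `S n = ∑_{k ≤ n} 1/k² - H n / n`.
The first term tends to `ζ(2) = π²/6`, the second to `0` since `H n / n` is a Cesàro mean of `1/k`. -/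

open Finset

noncomputable def H (n : ℕ) : ℝ := ∑ k ∈ Finset.Icc 1 n, (1 : ℝ) / k

open Filter Topology

theorem sum_Icc_one_eq_sum_range {M : Type*} [AddCommMonoid M] (f : ℕ → M) (n : ℕ) :
    ∑ k ∈ Icc 1 n, f k = ∑ i ∈ range n, f (i + 1) := by
  rw [range_eq_Ico, sum_Ico_add' f 0 n 1, zero_add, Ico_add_one_right_eq_Icc]

theorem H_eq_sum_range (n : ℕ) : H n = ∑ i ∈ range n, 1 / ((i : ℝ) + 1) := by
  simp only [H, sum_Icc_one_eq_sum_range, Nat.cast_add_one]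

theorem H_succ (n : ℕ) : H (n + 1) = H n + 1 / ((n : ℝ) + 1) := by
  simp only [H_eq_sum_range, sum_range_succ]

theorem tendsto_H_div_atTop : Tendsto (fun n : ℕ ↦ H n / n) atTop (𝓝 0) := by
  have h := (tendsto_one_div_add_atTop_nhds_zero_nat (𝕜 := ℝ)).cesaro
  simpa only [H_eq_sum_range, div_eq_inv_mul] using h

theorem tendsto_sum_Icc_one_div_sq_atTop :
    Tendsto (fun n : ℕ ↦ ∑ k ∈ Icc 1 n, 1 / (k : ℝ) ^ 2) atTop (𝓝 (Real.pi ^ 2 / 6)) := by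
  have h := hasSum_zeta_two.tendsto_sum_nat.comp (tendsto_add_atTop_nat 1)
  refine h.congr fun n ↦ ?_
  simp [sum_range_succ', sum_Icc_one_eq_sum_range]

theorem H_slope_succ_succ {m k : ℕ} (hk : k < m) :
    (H (m + 1) - H (k + 1)) / (((m + 1 : ℕ) : ℝ) - ((k + 1 : ℕ) : ℝ)) =
      (H m - H k) / ((m : ℝ) - k) - 1 / (((m : ℝ) + 1) * ((k : ℝ) + 1)) := by
  have hmk : (m : ℝ) - k ≠ 0 := sub_ne_zero.mpr (by exact_mod_cast hk.ne')
  rw [H_succ, H_succ, show ((m + 1 : ℕ) : ℝ) - ((k + 1 : ℕ) : ℝ) = m - k by push_cast; ring]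
  field_simp
  ring

noncomputable def harmonicSlopeSum (n : ℕ) : ℝ :=
  ∑ k ∈ Icc 1 (n - 1), (H n - H k) / ((n : ℝ) - (k : ℝ))

theorem sum_range_H_slope (m : ℕ) :
    ∑ i ∈ range m, (H m - H i) / ((m : ℝ) - i) = H m / m + harmonicSlopeSum m := by
  rcases m with _ | m
  · simp [harmonicSlopeSum]
  · simp [harmonicSlopeSum, sum_range_succ', sum_Icc_one_eq_sum_range, H, add_comm]

theorem harmonicSlopeSum_succ (m : ℕ) :
    harmonicSlopeSum (m + 1) = harmonicSlopeSum m + H m / m - H m / (m + 1) := by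
  calc harmonicSlopeSum (m + 1)
      = ∑ i ∈ range m, (H (m + 1) - H (i + 1)) / (((m + 1 : ℕ) : ℝ) - ((i + 1 : ℕ) : ℝ)) := by
        rw [harmonicSlopeSum, Nat.add_sub_cancel, sum_Icc_one_eq_sum_range]
    _ = ∑ i ∈ range m, ((H m - H i) / ((m : ℝ) - i) - 1 / (((m : ℝ) + 1) * ((i : ℝ) + 1))) :=
        sum_congr rfl fun i hi ↦ H_slope_succ_succ (mem_range.mp hi)
    _ = harmonicSlopeSum m + H m / m - H m / (m + 1) := by
        have hH : ∑ i ∈ range m, 1 / (((m : ℝ) + 1) * ((i : ℝ) + 1)) = H m / (m + 1) := by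
          simp only [H_eq_sum_range, sum_div, div_div, mul_comm]
        rw [sum_sub_distrib, sum_range_H_slope, hH, add_comm (H m / m)]

theorem harmonicSlopeSum_eq (n : ℕ) :
    harmonicSlopeSum n = ∑ k ∈ Icc 1 n, 1 / (k : ℝ) ^ 2 - H n / n := by
  induction n with
  | zero => simp [harmonicSlopeSum, H]
  | succ m ih =>
    rw [harmonicSlopeSum_succ, ih, sum_Icc_succ_top (Nat.le_add_left 1 m), H_succ]
    push_cast
    field_simp
    ring

theorem tendsto_harmonicSlopeSum :
    Tendsto harmonicSlopeSum atTop (𝓝 (Real.pi ^ 2 / 6)) := by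
  rw [funext harmonicSlopeSum_eq, ← sub_zero (Real.pi ^ 2 / 6)]
  exact tendsto_sum_Icc_one_div_sq_atTop.sub tendsto_H_div_atTop

theorem stmt_14 :
    ∀ ε : ℝ, 0 < ε → ∃ n₀ : ℕ, ∀ n : ℕ, n₀ ≤ n →
      |Real.pi ^ 2 / 6 -
        ∑ k ∈ Finset.Icc 1 (n - 1), (H n - H k) / ((n : ℝ) - (k : ℝ))| ≤ ε := by
  intro ε hε
  obtain ⟨n₀, hn₀⟩ := Metric.tendsto_atTop.mp tendsto_harmonicSlopeSum ε hε
  refine ⟨n₀, fun n hn ↦ ?_⟩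
  rw [abs_sub_comm, ← Real.dist_eq]
  exact (hn₀ n hn).le
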